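/- arXiv:1801.03985 — 2 statements merged into one kernel-verified Lean document; each statement's English description precedes it below -/
import Mathlib

section
/- For every real number M, there exists a tree T and a complex Wiener root z of T with Im(z) > M. That is, Wiener roots of trees have arbitrarily large imaginary part. -/
set_option linter.unusedVariables false
set_option maxHeartbeats 1000000

/-- The Wiener polynomial of a graph `G`, evaluated at `x : ℂ`:
`W(G;x) = Σ x^{d(u,v)}`, the sum over all unordered pairs of distinct vertices. -/
noncomputable def wienerPoly {V : Type*} [Fintype V] [DecidableEq V]
    (G : SimpleGraph V) (x : ℂ) : ℂ :=
  ∑ p ∈ (Finset.univ : Finset V).sym2.filter (fun p => ¬ p.IsDiag),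
    x ^ Sym2.lift ⟨fun u v => G.dist u v, fun u v => SimpleGraph.dist_comm⟩ p

/-- `distCount G i` is `d_i(G)`, the number of unordered pairs of distinct
vertices of `G` at graph distance exactly `i`. -/
noncomputable def distCount {V : Type*} [Fintype V] [DecidableEq V]
    (G : SimpleGraph V) (i : ℕ) : ℕ :=
  (((Finset.univ : Finset V).sym2.filter (fun p => ¬ p.IsDiag)).filter
    (fun p => Sym2.lift ⟨fun u v => G.dist u v, fun u v => SimpleGraph.dist_comm⟩ p = i)).card

/-- The complete graph on `n` vertices minus one edge. -/
def KminusE (n : ℕ) [NeZero n] : SimpleGraph (Fin n) :=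
  (⊤ : SimpleGraph (Fin n)).deleteEdges {s(0, 1)}

/-- The star `K_{1,n-1}`: the center `0` is adjacent to the `n - 1` other vertices. -/
def starGraph (n : ℕ) [NeZero n] : SimpleGraph (Fin n) where
  Adj u v := u ≠ v ∧ (u = 0 ∨ v = 0)
  symm := by
    constructor
    intro u v h
    exact ⟨h.1.symm, h.2.symm⟩
  loopless := by
    constructor
    intro u h
    exact h.1 rfl

namespace WAux

open SimpleGraph Finset Polynomial

/-- Caterpillar: path `v0 … v6` plus `p` leaves attached to `v3`. -/
def Cat (p : ℕ) : SimpleGraph (Fin (p + 7)) where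
  Adj u v := (v.val = u.val + 1 ∧ v.val ≤ 6) ∨ (u.val = v.val + 1 ∧ u.val ≤ 6)
    ∨ (u.val = 3 ∧ 7 ≤ v.val) ∨ (v.val = 3 ∧ 7 ≤ u.val)
  symm := by constructor; intro u v h; tauto
  loopless := by constructor; intro u h; omega

instance (p : ℕ) : DecidableRel (Cat p).Adj := fun u v =>
  inferInstanceAs (Decidable ((v.val = u.val + 1 ∧ v.val ≤ 6) ∨ (u.val = v.val + 1 ∧ u.val ≤ 6)
    ∨ (u.val = 3 ∧ 7 ≤ v.val) ∨ (v.val = 3 ∧ 7 ≤ u.val)))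

lemma cat_adj {p : ℕ} (u v : Fin (p + 7)) : (Cat p).Adj u v ↔
    ((v.val = u.val + 1 ∧ v.val ≤ 6) ∨ (u.val = v.val + 1 ∧ u.val ≤ 6)
    ∨ (u.val = 3 ∧ 7 ≤ v.val) ∨ (v.val = 3 ∧ 7 ≤ u.val)) := Iff.rfl

/-- Lipschitz functions bound distances from below along walks. -/
lemma abs_le_walk_length {V : Type*} {G : SimpleGraph V} (f : V → ℤ)
    (hf : ∀ u v, G.Adj u v → |f u - f v| ≤ 1) {u v : V} (w : G.Walk u v) :
    |f u - f v| ≤ (w.length : ℤ) := by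
  induction w with
  | nil => simp
  | @cons a b c h w ih =>
    have h1 := hf a b h
    have := abs_sub_le (f a) (f b) (f c)
    rw [Walk.length_cons]
    push_cast
    omega

lemma dist_lower {V : Type*} {G : SimpleGraph V} (f : V → ℤ)
    (hf : ∀ u v, G.Adj u v → |f u - f v| ≤ 1) {u v : V} (hr : G.Reachable u v) :
    |f u - f v| ≤ (G.dist u v : ℤ) := by
  obtain ⟨w, hw⟩ := hr.exists_walk_length_eq_dist
  simpa [hw] using abs_le_walk_length f hf w

/-- Walks along the path part. -/
lemma pathWalk (p : ℕ) : ∀ (d i : ℕ) (h : i + d ≤ 6),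
    ∃ w : (Cat p).Walk ⟨i, by omega⟩ ⟨i + d, by omega⟩, w.length = d := by
  intro d
  induction d with
  | zero => intro i h; exact ⟨Walk.nil.copy rfl (by ext; simp), by simp⟩
  | succ d ih =>
    intro i h
    obtain ⟨w, hw⟩ := ih (i + 1) (by omega)
    have hadj : (Cat p).Adj ⟨i, by omega⟩ ⟨i + 1, by omega⟩ := by
      rw [cat_adj]; left; exact ⟨rfl, show i + 1 ≤ 6 by omega⟩
    refine ⟨(Walk.cons hadj w).copy rfl (by ext; simp; omega), by simp [hw]⟩

lemma reachable_root (p : ℕ) (v : Fin (p + 7)) : (Cat p).Reachable ⟨3, by omega⟩ v := by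
  by_cases hv : v.val ≤ 6
  · rcases le_or_gt 3 v.val with h3 | h3
    · obtain ⟨w, -⟩ := pathWalk p (v.val - 3) 3 (by omega)
      exact ⟨w.copy rfl (by apply Fin.ext; simp; omega)⟩
    · obtain ⟨w, -⟩ := pathWalk p (3 - v.val) v.val (by omega)
      exact ⟨(w.copy (by apply Fin.ext; simp) (by apply Fin.ext; simp; omega)).reverse⟩
  · exact Adj.reachable (by rw [cat_adj]; right; right; left; exact ⟨rfl, by omega⟩)

lemma cat_connected (p : ℕ) : (Cat p).Connected := by
  rw [connected_iff]
  refine ⟨fun u v => ((reachable_root p u).symm.trans (reachable_root p v)), ⟨⟨3, by omega⟩⟩⟩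

/-- Reachability respects cuts. -/
lemma cut_iff {V : Type*} {G : SimpleGraph V} (s : V → Prop)
    (hs : ∀ u v, G.Adj u v → (s u ↔ s v)) {u v : V} (h : G.Reachable u v) : s u ↔ s v := by
  obtain ⟨w⟩ := h
  induction w with
  | nil => rfl
  | cons h w ih => exact (hs _ _ h).trans ih

lemma cat_isTree (p : ℕ) : (Cat p).IsTree := by
  refine ⟨cat_connected p, ?_⟩
  rw [isAcyclic_iff_forall_adj_isBridge]
  intro u v huv
  rw [isBridge_iff]
  intro hreach
  -- split on which kind of edge {u, v} is; wlog via symmetry is handled by cases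
  rcases (cat_adj u v).mp huv with h | h | h | h
  · -- v = u+1 ≤ 6 : cut at position u.val
    have := cut_iff (fun x => (if x.val ≤ 6 then x.val else 3) ≤ u.val) ?_ hreach
    · have hu6 : u.val ≤ 6 := by omega
      simp only [hu6, h.2, if_pos, if_true] at this
      exact absurd (this.mp le_rfl) (by omega)
    · rintro a b ⟨hab, hne⟩
      rw [fromEdgeSet_adj] at hne
      push_neg at hne
      have hne' : s(a, b) ≠ s(u, v) := by
        intro hh; exact Adj.ne hab (hne (by simp [hh]))
      have hne2 : ¬(a.val = u.val ∧ b.val = v.val) ∧ ¬(a.val = v.val ∧ b.val = u.val) := by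
        constructor <;> rintro ⟨h1, h2⟩ <;> apply hne'
        · rw [show a = u from Fin.ext h1, show b = v from Fin.ext h2]
        · rw [show a = v from Fin.ext h1, show b = u from Fin.ext h2]
          exact Sym2.eq_swap
      rcases (cat_adj a b).mp hab with hc | hc | hc | hc <;> split_ifs <;> omega
  · -- u = v+1 ≤ 6
    have := cut_iff (fun x => (if x.val ≤ 6 then x.val else 3) ≤ v.val) ?_ hreach
    · have hv6 : v.val ≤ 6 := by omega
      simp only [hv6, h.2, if_pos, if_true] at this
      exact absurd (this.mpr le_rfl) (by omega)
    · rintro a b ⟨hab, hne⟩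
      rw [fromEdgeSet_adj] at hne
      push_neg at hne
      have hne' : s(a, b) ≠ s(u, v) := by
        intro hh; exact Adj.ne hab (hne (by simp [hh]))
      have hne2 : ¬(a.val = u.val ∧ b.val = v.val) ∧ ¬(a.val = v.val ∧ b.val = u.val) := by
        constructor <;> rintro ⟨h1, h2⟩ <;> apply hne'
        · rw [show a = u from Fin.ext h1, show b = v from Fin.ext h2]
        · rw [show a = v from Fin.ext h1, show b = u from Fin.ext h2]
          exact Sym2.eq_swap
      rcases (cat_adj a b).mp hab with hc | hc | hc | hc <;> split_ifs <;> omega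
  · -- u = center, v = leaf : cut s x := x = v
    have := cut_iff (fun x => x = v) ?_ hreach
    · have : u = v := this.mpr rfl
      exact (Adj.ne huv) this
    · rintro a b ⟨hab, hne⟩
      rw [fromEdgeSet_adj] at hne
      push_neg at hne
      have hne' : s(a, b) ≠ s(u, v) := by
        intro hh; exact Adj.ne hab (hne (by simp [hh]))
      constructor <;> intro hx
      · subst hx
        rcases (cat_adj a b).mp hab with hc | hc | hc | hc
        · omega
        · omega
        · omega
        · -- b.val = 3, a = v with a.val ≥ 7 : so edge is s(b,a) = s(u,v)
          exfalso
          apply hne'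
          rw [show u = b from Fin.ext (by omega)]
          exact Sym2.eq_swap
      · subst hx
        rcases (cat_adj a b).mp hab with hc | hc | hc | hc
        · omega
        · omega
        · exfalso
          apply hne'
          rw [show a = u from Fin.ext (by omega)]
        · omega
  · -- v = center, u = leaf
    have := cut_iff (fun x => x = u) ?_ hreach
    · have : v = u := this.mp rfl
      exact (Adj.ne huv) this.symm
    · rintro a b ⟨hab, hne⟩
      rw [fromEdgeSet_adj] at hne
      push_neg at hne
      have hne' : s(a, b) ≠ s(u, v) := by
        intro hh; exact Adj.ne hab (hne (by simp [hh]))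
      constructor <;> intro hx
      · subst hx
        rcases (cat_adj a b).mp hab with hc | hc | hc | hc
        · omega
        · omega
        · omega
        · exfalso
          apply hne'
          rw [show b = v from Fin.ext (by omega)]
      · subst hx
        rcases (cat_adj a b).mp hab with hc | hc | hc | hc
        · omega
        · omega
        · exfalso
          apply hne'
          rw [show v = a from Fin.ext (by omega)]
          exact Sym2.eq_swap
        · omega



section Dist
variable (p : ℕ)

lemma lip_c (c : ℤ) (hc2 : 2 ≤ c) (hc4 : c ≤ 4) : ∀ u v : Fin (p+7), (Cat p).Adj u v →
    |(if u.val ≤ 6 then (u.val : ℤ) else c) - (if v.val ≤ 6 then (v.val : ℤ) else c)| ≤ 1 := by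
  intro u v h
  rw [abs_le]
  rcases (cat_adj u v).mp h with hc | hc | hc | hc <;> split_ifs <;> omega

lemma dist_lower_c (c : ℤ) (hc2 : 2 ≤ c) (hc4 : c ≤ 4) (u v : Fin (p+7)) :
    |(if u.val ≤ 6 then (u.val : ℤ) else c) - (if v.val ≤ 6 then (v.val : ℤ) else c)|
      ≤ ((Cat p).dist u v : ℤ) :=
  dist_lower _ (lip_c p c hc2 hc4) ((cat_connected p) u v)

lemma dist_path (i j : ℕ) (hij : i ≤ j) (hj : j ≤ 6) :
    (Cat p).dist ⟨i, by omega⟩ ⟨j, by omega⟩ = j - i := by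
  refine le_antisymm ?_ ?_
  · obtain ⟨w, hw⟩ := pathWalk p (j - i) i (by omega)
    have := SimpleGraph.dist_le
      (show (Cat p).Walk ⟨i, by omega⟩ ⟨j, by omega⟩ from
        w.copy rfl (by apply Fin.ext; simp; omega))
    simpa [hw] using this
  · have := dist_lower_c p 4 (by norm_num) (by norm_num) ⟨i, by omega⟩ ⟨j, by omega⟩
    simp only [show i ≤ 6 by omega, show j ≤ 6 by omega, if_pos, if_true] at this
    rw [abs_le] at this
    omega

lemma leafWalk (ℓ : Fin (p+7)) (hℓ : 7 ≤ ℓ.val) (j : ℕ) (hj : j ≤ 6) :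
    ∃ w : (Cat p).Walk ℓ ⟨j, by omega⟩, w.length = 1 + (max j 3 - min j 3) := by
  have hadj : (Cat p).Adj ℓ ⟨3, by omega⟩ := by
    rw [cat_adj]; right; right; right; exact ⟨rfl, by omega⟩
  rcases le_or_gt 3 j with h3 | h3
  · obtain ⟨w, hw⟩ := pathWalk p (j - 3) 3 (by omega)
    refine ⟨Walk.cons hadj (w.copy rfl (by apply Fin.ext; simp; omega)), ?_⟩
    simp [hw]; omega
  · obtain ⟨w, hw⟩ := pathWalk p (3 - j) j (by omega)
    refine ⟨Walk.cons hadj ((w.copy rfl (by apply Fin.ext; simp; omega)).reverse), ?_⟩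
    simp [hw]; omega

lemma dist_leaf_path (ℓ : Fin (p+7)) (hℓ : 7 ≤ ℓ.val) (j : ℕ) (hj : j ≤ 6) :
    (Cat p).dist ℓ ⟨j, by omega⟩ ≤ 1 + (max j 3 - min j 3) := by
  obtain ⟨w, hw⟩ := leafWalk p ℓ hℓ j hj
  simpa [hw] using SimpleGraph.dist_le w

lemma dist_leaf_zero (ℓ : Fin (p+7)) (hℓ : 7 ≤ ℓ.val) :
    (Cat p).dist ℓ ⟨0, by omega⟩ = 4 := by
  refine le_antisymm (by simpa using dist_leaf_path p ℓ hℓ 0 (by omega)) ?_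
  have := dist_lower_c p 4 (by norm_num) (by norm_num) ℓ ⟨0, by omega⟩
  simp only [show ¬ (ℓ.val ≤ 6) by omega, if_false, if_neg, show (0:ℕ) ≤ 6 by omega, if_pos,
    if_true] at this
  rw [abs_le] at this
  omega

lemma dist_leaf_six (ℓ : Fin (p+7)) (hℓ : 7 ≤ ℓ.val) :
    (Cat p).dist ℓ ⟨6, by omega⟩ = 4 := by
  refine le_antisymm (by simpa using dist_leaf_path p ℓ hℓ 6 (by omega)) ?_
  have := dist_lower_c p 2 (by norm_num) (by norm_num) ℓ ⟨6, by omega⟩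
  simp only [show ¬ (ℓ.val ≤ 6) by omega, if_false, if_neg, le_refl, if_pos, if_true] at this
  rw [abs_le] at this
  omega

lemma dist_leaf_leaf (ℓ ℓ' : Fin (p+7)) (hℓ : 7 ≤ ℓ.val) (hℓ' : 7 ≤ ℓ'.val) :
    (Cat p).dist ℓ ℓ' ≤ 2 := by
  have hadj : (Cat p).Adj ℓ ⟨3, by omega⟩ := by
    rw [cat_adj]; right; right; right; exact ⟨rfl, by omega⟩
  have hadj' : (Cat p).Adj ⟨3, by omega⟩ ℓ' := by
    rw [cat_adj]; right; right; left; exact ⟨rfl, by omega⟩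
  by_cases h : ℓ = ℓ'
  · subst h; rw [SimpleGraph.dist_self]; omega
  · simpa using SimpleGraph.dist_le (Walk.cons hadj (Walk.cons hadj' Walk.nil))

/-- Full classification of distances in the caterpillar. -/
lemma dist_cases (u v : Fin (p+7)) :
    ((Cat p).dist u v ≤ 3) ∨
    (u.val ≤ 6 ∧ v.val ≤ 6 ∧ (Cat p).dist u v = max u.val v.val - min u.val v.val) ∨
    ((((7 ≤ u.val ∧ (v.val = 0 ∨ v.val = 6)) ∨ (7 ≤ v.val ∧ (u.val = 0 ∨ u.val = 6)))) ∧
      (Cat p).dist u v = 4) := by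
  have hu : u = ⟨u.val, u.isLt⟩ := by apply Fin.ext; rfl
  have hv : v = ⟨v.val, v.isLt⟩ := by apply Fin.ext; rfl
  rcases le_or_gt u.val 6 with hu6 | hu6 <;> rcases le_or_gt v.val 6 with hv6 | hv6
  · right; left
    refine ⟨hu6, hv6, ?_⟩
    rcases le_total u.val v.val with h | h
    · rw [hu, hv, dist_path p u.val v.val h hv6]; omega
    · rw [SimpleGraph.dist_comm, hu, hv, dist_path p v.val u.val h hu6]; omega
  · -- u path, v leaf
    rcases (by omega : u.val = 0 ∨ u.val = 6 ∨ (1 ≤ u.val ∧ u.val ≤ 5)) with h | h | h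
    · right; right
      refine ⟨Or.inr ⟨by omega, Or.inl h⟩, ?_⟩
      rw [SimpleGraph.dist_comm, hu]
      have : (⟨u.val, u.isLt⟩ : Fin (p+7)) = ⟨0, by omega⟩ := by apply Fin.ext; simpa using h
      rw [this]
      exact dist_leaf_zero p v (by omega)
    · right; right
      refine ⟨Or.inr ⟨by omega, Or.inr h⟩, ?_⟩
      rw [SimpleGraph.dist_comm, hu]
      have : (⟨u.val, u.isLt⟩ : Fin (p+7)) = ⟨6, by omega⟩ := by apply Fin.ext; simpa using h
      rw [this]
      exact dist_leaf_six p v (by omega)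
    · left
      rw [SimpleGraph.dist_comm, hu]
      have := dist_leaf_path p v (by omega) u.val (by omega)
      refine le_trans ?_ (le_trans this (by omega))
      exact le_of_eq rfl
  · -- u leaf, v path
    rcases (by omega : v.val = 0 ∨ v.val = 6 ∨ (1 ≤ v.val ∧ v.val ≤ 5)) with h | h | h
    · right; right
      refine ⟨Or.inl ⟨by omega, Or.inl h⟩, ?_⟩
      rw [hv]
      have : (⟨v.val, v.isLt⟩ : Fin (p+7)) = ⟨0, by omega⟩ := by apply Fin.ext; simpa using h
      rw [this]
      exact dist_leaf_zero p u (by omega)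
    · right; right
      refine ⟨Or.inl ⟨by omega, Or.inr h⟩, ?_⟩
      rw [hv]
      have : (⟨v.val, v.isLt⟩ : Fin (p+7)) = ⟨6, by omega⟩ := by apply Fin.ext; simpa using h
      rw [this]
      exact dist_leaf_six p u (by omega)
    · left
      rw [hv]
      have := dist_leaf_path p u (by omega) v.val (by omega)
      refine le_trans ?_ (le_trans this (by omega))
      exact le_of_eq rfl
  · left
    exact le_trans (dist_leaf_leaf p u v (by omega) (by omega)) (by omega)

end Dist

section Count
variable (p : ℕ)

/-- The set of unordered pairs of distinct vertices. -/
def S : Finset (Sym2 (Fin (p+7))) :=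
  (Finset.univ : Finset (Fin (p+7))).sym2.filter (fun e => ¬ e.IsDiag)

noncomputable def Dd : Sym2 (Fin (p+7)) → ℕ :=
  Sym2.lift ⟨fun u v => (Cat p).dist u v, fun u v => SimpleGraph.dist_comm⟩

lemma Dd_mk (u v : Fin (p+7)) : Dd p s(u, v) = (Cat p).dist u v := rfl

lemma mem_S (u v : Fin (p+7)) : s(u, v) ∈ S p ↔ u ≠ v := by
  simp [S]

lemma sym2_eq_of_vals {u v : Fin (p+7)} {a b : ℕ} (ha : a < p+7) (hb : b < p+7)
    (h : (u.val = a ∧ v.val = b) ∨ (u.val = b ∧ v.val = a)) :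
    s(u, v) = s((⟨a, ha⟩ : Fin (p+7)), (⟨b, hb⟩ : Fin (p+7))) := by
  rcases h with ⟨h1, h2⟩ | ⟨h1, h2⟩
  · rw [show u = ⟨a, ha⟩ from Fin.ext h1, show v = ⟨b, hb⟩ from Fin.ext h2]
  · rw [show u = ⟨b, hb⟩ from Fin.ext h1, show v = ⟨a, ha⟩ from Fin.ext h2]
    exact Sym2.eq_swap

lemma Dd_le_six (e : Sym2 (Fin (p+7))) : Dd p e ≤ 6 := by
  induction e using Sym2.ind with
  | _ u v =>
    rw [Dd_mk]
    rcases dist_cases p u v with h | ⟨hu6, hv6, h⟩ | ⟨-, h⟩ <;> omega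

lemma filter6 : (S p).filter (fun e => Dd p e = 6) =
    {s((⟨0, by omega⟩ : Fin (p+7)), (⟨6, by omega⟩ : Fin (p+7)))} := by
  ext e
  induction e using Sym2.ind with
  | _ u v =>
    rw [Finset.mem_filter, Finset.mem_singleton, mem_S, Dd_mk]
    constructor
    · rintro ⟨hne, hd⟩
      rcases dist_cases p u v with h | ⟨hu6, hv6, h⟩ | ⟨-, h⟩
      · omega
      · exact sym2_eq_of_vals _ _ _ (by omega)
      · omega
    · intro h
      rw [Sym2.eq_iff] at h
      have hv : (u.val = 0 ∧ v.val = 6) ∨ (u.val = 6 ∧ v.val = 0) := by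
        rcases h with ⟨h1, h2⟩ | ⟨h1, h2⟩ <;> rw [h1, h2] <;> simp <;> omega
      constructor
      · intro hE; rw [hE] at hv; omega
      · rcases hv with ⟨h1, h2⟩ | ⟨h1, h2⟩
        · rw [show u = ⟨0, by omega⟩ from Fin.ext h1, show v = ⟨6, by omega⟩ from Fin.ext h2]
          exact dist_path p 0 6 (by omega) (by omega)
        · rw [show u = ⟨6, by omega⟩ from Fin.ext h1, show v = ⟨0, by omega⟩ from Fin.ext h2,
            SimpleGraph.dist_comm]
          exact dist_path p 0 6 (by omega) (by omega)

lemma filter5 : (S p).filter (fun e => Dd p e = 5) =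
    {s((⟨0, by omega⟩ : Fin (p+7)), (⟨5, by omega⟩ : Fin (p+7))),
     s((⟨1, by omega⟩ : Fin (p+7)), (⟨6, by omega⟩ : Fin (p+7)))} := by
  ext e
  induction e using Sym2.ind with
  | _ u v =>
    rw [Finset.mem_filter, Finset.mem_insert, Finset.mem_singleton, mem_S, Dd_mk]
    constructor
    · rintro ⟨hne, hd⟩
      rcases dist_cases p u v with h | ⟨hu6, hv6, h⟩ | ⟨-, h⟩
      · omega
      · rcases (by omega : (u.val = 0 ∧ v.val = 5) ∨ (u.val = 5 ∧ v.val = 0)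
            ∨ (u.val = 1 ∧ v.val = 6) ∨ (u.val = 6 ∧ v.val = 1)) with h' | h' | h' | h'
        · exact Or.inl (sym2_eq_of_vals _ _ _ (Or.inl h'))
        · exact Or.inl (sym2_eq_of_vals _ _ _ (Or.inr h'))
        · exact Or.inr (sym2_eq_of_vals _ _ _ (Or.inl h'))
        · exact Or.inr (sym2_eq_of_vals _ _ _ (Or.inr h'))
      · omega
    · intro h
      have hv : (u.val = 0 ∧ v.val = 5) ∨ (u.val = 5 ∧ v.val = 0)
          ∨ (u.val = 1 ∧ v.val = 6) ∨ (u.val = 6 ∧ v.val = 1) := by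
        rcases h with h | h <;> rw [Sym2.eq_iff] at h <;>
          rcases h with ⟨h1, h2⟩ | ⟨h1, h2⟩ <;> rw [h1, h2] <;> simp <;> omega
      refine ⟨by omega, ?_⟩
      rcases hv with ⟨h1, h2⟩ | ⟨h1, h2⟩ | ⟨h1, h2⟩ | ⟨h1, h2⟩
      · rw [show u = ⟨0, by omega⟩ from Fin.ext h1, show v = ⟨5, by omega⟩ from Fin.ext h2]
        exact dist_path p 0 5 (by omega) (by omega)
      · rw [show u = ⟨5, by omega⟩ from Fin.ext h1, show v = ⟨0, by omega⟩ from Fin.ext h2,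
          SimpleGraph.dist_comm]
        exact dist_path p 0 5 (by omega) (by omega)
      · rw [show u = ⟨1, by omega⟩ from Fin.ext h1, show v = ⟨6, by omega⟩ from Fin.ext h2]
        exact dist_path p 1 6 (by omega) (by omega)
      · rw [show u = ⟨6, by omega⟩ from Fin.ext h1, show v = ⟨1, by omega⟩ from Fin.ext h2,
          SimpleGraph.dist_comm]
        exact dist_path p 1 6 (by omega) (by omega)

/-- The leaves. -/
def L : Finset (Fin (p+7)) := Finset.univ.filter (fun x => 7 ≤ x.val)

lemma card_L : (L p).card = p := by
  have h : L p = (Finset.univ : Finset (Fin p)).image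
      (fun k => (⟨k.val + 7, by omega⟩ : Fin (p+7))) := by
    ext x
    simp only [L, Finset.mem_filter, Finset.mem_univ, true_and, Finset.mem_image]
    constructor
    · intro hx
      exact ⟨⟨x.val - 7, by omega⟩, Fin.ext (show x.val - 7 + 7 = x.val by omega)⟩
    · rintro ⟨k, -, rfl⟩
      simp
  rw [h, Finset.card_image_of_injective _ (fun a b hab => Fin.ext (by
    have := congrArg Fin.val hab; simp at this; omega))]
  simp

lemma filter4 : (S p).filter (fun e => Dd p e = 4) =
    ({s((⟨0, by omega⟩ : Fin (p+7)), (⟨4, by omega⟩ : Fin (p+7))),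
      s((⟨1, by omega⟩ : Fin (p+7)), (⟨5, by omega⟩ : Fin (p+7))),
      s((⟨2, by omega⟩ : Fin (p+7)), (⟨6, by omega⟩ : Fin (p+7)))} : Finset (Sym2 (Fin (p+7))))
    ∪ (L p).image (fun ℓ => s(ℓ, (⟨0, by omega⟩ : Fin (p+7))))
    ∪ (L p).image (fun ℓ => s(ℓ, (⟨6, by omega⟩ : Fin (p+7)))) := by
  ext e
  induction e using Sym2.ind with
  | _ u v =>
    rw [Finset.mem_union, Finset.mem_union, Finset.mem_insert, Finset.mem_insert,
      Finset.mem_singleton, Finset.mem_filter, mem_S, Dd_mk]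
    simp only [Finset.mem_image, L, Finset.mem_filter, Finset.mem_univ, true_and]
    constructor
    · rintro ⟨hne, hd⟩
      rcases dist_cases p u v with h | ⟨hu6, hv6, h⟩ | ⟨hlf, h⟩
      · omega
      · rcases (by omega : (u.val = 0 ∧ v.val = 4) ∨ (u.val = 4 ∧ v.val = 0)
            ∨ (u.val = 1 ∧ v.val = 5) ∨ (u.val = 5 ∧ v.val = 1)
            ∨ (u.val = 2 ∧ v.val = 6) ∨ (u.val = 6 ∧ v.val = 2))
          with h' | h' | h' | h' | h' | h'
        · exact Or.inl (Or.inl (Or.inl (sym2_eq_of_vals _ _ _ (Or.inl h'))))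
        · exact Or.inl (Or.inl (Or.inl (sym2_eq_of_vals _ _ _ (Or.inr h'))))
        · exact Or.inl (Or.inl (Or.inr (Or.inl (sym2_eq_of_vals _ _ _ (Or.inl h')))))
        · exact Or.inl (Or.inl (Or.inr (Or.inl (sym2_eq_of_vals _ _ _ (Or.inr h')))))
        · exact Or.inl (Or.inl (Or.inr (Or.inr (sym2_eq_of_vals _ _ _ (Or.inl h')))))
        · exact Or.inl (Or.inl (Or.inr (Or.inr (sym2_eq_of_vals _ _ _ (Or.inr h')))))
      · rcases hlf with ⟨hu7, hv06⟩ | ⟨hv7, hu06⟩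
        · rcases hv06 with h0 | h6
          · exact Or.inl (Or.inr ⟨u, hu7, by
              rw [show v = ⟨0, by omega⟩ from Fin.ext h0]⟩)
          · exact Or.inr ⟨u, hu7, by rw [show v = ⟨6, by omega⟩ from Fin.ext h6]⟩
        · rcases hu06 with h0 | h6
          · exact Or.inl (Or.inr ⟨v, hv7, by
              rw [show u = ⟨0, by omega⟩ from Fin.ext h0]; exact Sym2.eq_swap⟩)
          · exact Or.inr ⟨v, hv7, by
              rw [show u = ⟨6, by omega⟩ from Fin.ext h6]; exact Sym2.eq_swap⟩
    · intro h
      rcases h with ((h | h | h) | ⟨ℓ, hℓ, h⟩) | ⟨ℓ, hℓ, h⟩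
      · have hv : (u.val = 0 ∧ v.val = 4) ∨ (u.val = 4 ∧ v.val = 0) := by
          rw [Sym2.eq_iff] at h
          rcases h with ⟨h1, h2⟩ | ⟨h1, h2⟩ <;> rw [h1, h2] <;> simp <;> omega
        refine ⟨by omega, ?_⟩
        rcases hv with ⟨h1, h2⟩ | ⟨h1, h2⟩
        · rw [show u = ⟨0, by omega⟩ from Fin.ext h1, show v = ⟨4, by omega⟩ from Fin.ext h2]
          exact dist_path p 0 4 (by omega) (by omega)
        · rw [show u = ⟨4, by omega⟩ from Fin.ext h1, show v = ⟨0, by omega⟩ from Fin.ext h2,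
            SimpleGraph.dist_comm]
          exact dist_path p 0 4 (by omega) (by omega)
      · have hv : (u.val = 1 ∧ v.val = 5) ∨ (u.val = 5 ∧ v.val = 1) := by
          rw [Sym2.eq_iff] at h
          rcases h with ⟨h1, h2⟩ | ⟨h1, h2⟩ <;> rw [h1, h2] <;> simp <;> omega
        refine ⟨by omega, ?_⟩
        rcases hv with ⟨h1, h2⟩ | ⟨h1, h2⟩
        · rw [show u = ⟨1, by omega⟩ from Fin.ext h1, show v = ⟨5, by omega⟩ from Fin.ext h2]
          exact dist_path p 1 5 (by omega) (by omega)
        · rw [show u = ⟨5, by omega⟩ from Fin.ext h1, show v = ⟨1, by omega⟩ from Fin.ext h2,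
            SimpleGraph.dist_comm]
          exact dist_path p 1 5 (by omega) (by omega)
      · have hv : (u.val = 2 ∧ v.val = 6) ∨ (u.val = 6 ∧ v.val = 2) := by
          rw [Sym2.eq_iff] at h
          rcases h with ⟨h1, h2⟩ | ⟨h1, h2⟩ <;> rw [h1, h2] <;> simp <;> omega
        refine ⟨by omega, ?_⟩
        rcases hv with ⟨h1, h2⟩ | ⟨h1, h2⟩
        · rw [show u = ⟨2, by omega⟩ from Fin.ext h1, show v = ⟨6, by omega⟩ from Fin.ext h2]
          exact dist_path p 2 6 (by omega) (by omega)
        · rw [show u = ⟨6, by omega⟩ from Fin.ext h1, show v = ⟨2, by omega⟩ from Fin.ext h2,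
            SimpleGraph.dist_comm]
          exact dist_path p 2 6 (by omega) (by omega)
      · have hv : (u = ℓ ∧ v.val = 0) ∨ (u.val = 0 ∧ v = ℓ) := by
          rw [Sym2.eq_iff] at h
          rcases h with ⟨h1, h2⟩ | ⟨h1, h2⟩
          · exact Or.inl ⟨h1.symm, by rw [← h2]⟩
          · exact Or.inr ⟨by rw [← h2], h1.symm⟩
        rcases hv with ⟨rfl, h2⟩ | ⟨h1, rfl⟩
        · refine ⟨by intro hE; rw [hE] at hℓ; omega, ?_⟩
          rw [show v = ⟨0, by omega⟩ from Fin.ext h2]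
          exact dist_leaf_zero p u hℓ
        · refine ⟨by intro hE; rw [← hE] at hℓ; omega, ?_⟩
          rw [show u = ⟨0, by omega⟩ from Fin.ext h1, SimpleGraph.dist_comm]
          exact dist_leaf_zero p v hℓ
      · have hv : (u = ℓ ∧ v.val = 6) ∨ (u.val = 6 ∧ v = ℓ) := by
          rw [Sym2.eq_iff] at h
          rcases h with ⟨h1, h2⟩ | ⟨h1, h2⟩
          · exact Or.inl ⟨h1.symm, by rw [← h2]⟩
          · exact Or.inr ⟨by rw [← h2], h1.symm⟩
        rcases hv with ⟨rfl, h2⟩ | ⟨h1, rfl⟩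
        · refine ⟨by intro hE; rw [hE] at hℓ; omega, ?_⟩
          rw [show v = ⟨6, by omega⟩ from Fin.ext h2]
          exact dist_leaf_six p u hℓ
        · refine ⟨by intro hE; rw [← hE] at hℓ; omega, ?_⟩
          rw [show u = ⟨6, by omega⟩ from Fin.ext h1, SimpleGraph.dist_comm]
          exact dist_leaf_six p v hℓ

end Count
section Card
variable (p : ℕ)

lemma card6 : (((S p)).filter (fun e => Dd p e = 6)).card = 1 := by
  rw [filter6]; simp

lemma card5 : (((S p)).filter (fun e => Dd p e = 5)).card = 2 := by
  rw [filter5, Finset.card_insert_of_notMem, Finset.card_singleton]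
  simp only [Finset.mem_singleton, Sym2.eq_iff]
  rintro (⟨h1, h2⟩ | ⟨h1, h2⟩) <;> exact absurd (congrArg Fin.val h1) (by simp)

lemma card4 : (((S p)).filter (fun e => Dd p e = 4)).card = 3 + 2 * p := by
  rw [filter4]
  have hBC : Disjoint ((L p).image (fun ℓ => s(ℓ, (⟨0, by omega⟩ : Fin (p+7)))))
      ((L p).image (fun ℓ => s(ℓ, (⟨6, by omega⟩ : Fin (p+7))))) := by
    rw [Finset.disjoint_left]
    rintro e he he'
    simp only [Finset.mem_image, L, Finset.mem_filter, Finset.mem_univ, true_and] at he he'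
    obtain ⟨ℓ, hℓ, rfl⟩ := he
    obtain ⟨ℓ', hℓ', h⟩ := he'
    rw [Sym2.eq_iff] at h
    rcases h with ⟨h1, h2⟩ | ⟨h1, h2⟩ <;> exact absurd (congrArg Fin.val h2) (by simp <;> omega)
  have hABC : Disjoint ({s((⟨0, by omega⟩ : Fin (p+7)), (⟨4, by omega⟩ : Fin (p+7))),
      s((⟨1, by omega⟩ : Fin (p+7)), (⟨5, by omega⟩ : Fin (p+7))),
      s((⟨2, by omega⟩ : Fin (p+7)), (⟨6, by omega⟩ : Fin (p+7)))} : Finset (Sym2 (Fin (p+7))))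
      (((L p).image (fun ℓ => s(ℓ, (⟨0, by omega⟩ : Fin (p+7)))))
        ∪ ((L p).image (fun ℓ => s(ℓ, (⟨6, by omega⟩ : Fin (p+7)))))) := by
    rw [Finset.disjoint_left]
    rintro e he he'
    simp only [Finset.mem_insert, Finset.mem_singleton] at he
    simp only [Finset.mem_union, Finset.mem_image, L, Finset.mem_filter, Finset.mem_univ,
      true_and] at he'
    rcases he' with ⟨ℓ, hℓ, h⟩ | ⟨ℓ, hℓ, h⟩ <;> rcases he with rfl | rfl | rfl <;>
      rw [Sym2.eq_iff] at h <;>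
      rcases h with ⟨h1, h2⟩ | ⟨h1, h2⟩ <;>
      first
        | exact absurd (congrArg Fin.val h1) (by simp; omega)
        | exact absurd (congrArg Fin.val h2) (by simp <;> omega)
  have hinj0 : Set.InjOn (fun ℓ => s(ℓ, (⟨0, by omega⟩ : Fin (p+7)))) (L p) := by
    intro a ha b hb hab
    simp only [Sym2.eq_iff] at hab
    simp only [L, Finset.coe_filter, Set.mem_setOf_eq] at ha hb
    rcases hab with ⟨h1, h2⟩ | ⟨h1, h2⟩
    · exact h1
    · exact absurd (congrArg Fin.val h1) (by intro h; rw [h] at ha; simp at ha)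
  have hinj6 : Set.InjOn (fun ℓ => s(ℓ, (⟨6, by omega⟩ : Fin (p+7)))) (L p) := by
    intro a ha b hb hab
    simp only [Sym2.eq_iff] at hab
    simp only [L, Finset.coe_filter, Set.mem_setOf_eq] at ha hb
    rcases hab with ⟨h1, h2⟩ | ⟨h1, h2⟩
    · exact h1
    · exact absurd (congrArg Fin.val h1) (by simp; omega)
  rw [Finset.union_assoc, Finset.card_union_of_disjoint, Finset.card_union_of_disjoint hBC,
    Finset.card_image_of_injOn hinj0, Finset.card_image_of_injOn hinj6, card_L]
  · have c3 : ({s((⟨0, by omega⟩ : Fin (p+7)), (⟨4, by omega⟩ : Fin (p+7))),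
      s((⟨1, by omega⟩ : Fin (p+7)), (⟨5, by omega⟩ : Fin (p+7))),
      s((⟨2, by omega⟩ : Fin (p+7)), (⟨6, by omega⟩ : Fin (p+7)))} :
        Finset (Sym2 (Fin (p+7)))).card = 3 := by
      rw [Finset.card_insert_of_notMem, Finset.card_insert_of_notMem, Finset.card_singleton]
      · simp only [Finset.mem_singleton, Sym2.eq_iff]
        rintro (⟨h1, h2⟩ | ⟨h1, h2⟩) <;> exact absurd (congrArg Fin.val h1) (by simp)
      · simp only [Finset.mem_insert, Finset.mem_singleton, Sym2.eq_iff]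
        rintro ((⟨h1, h2⟩ | ⟨h1, h2⟩) | (⟨h1, h2⟩ | ⟨h1, h2⟩)) <;>
          exact absurd (congrArg Fin.val h1) (by simp)
    rw [c3]
    ring
  · exact hABC

end Card

section Poly
variable (p : ℕ)

noncomputable def P : Polynomial ℂ := ∑ e ∈ S p, Polynomial.X ^ (Dd p e)

lemma eval_P (z : ℂ) : (P p).eval z = wienerPoly (Cat p) z := by
  rw [P, Polynomial.eval_finset_sum]
  simp only [Polynomial.eval_pow, Polynomial.eval_X]
  rfl

lemma coeff_P (k : ℕ) :
    (P p).coeff k = ((((S p)).filter (fun e => Dd p e = k)).card : ℂ) := by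
  rw [P, Polynomial.finset_sum_coeff]
  simp only [Polynomial.coeff_X_pow]
  rw [Finset.sum_boole]
  simp [eq_comm]

lemma P_natDegree : (P p).natDegree = 6 := by
  have h6 : (P p).coeff 6 = 1 := by rw [coeff_P, card6]; norm_num
  refine le_antisymm ?_ (Polynomial.le_natDegree_of_ne_zero (by rw [h6]; norm_num))
  rw [Polynomial.natDegree_le_iff_coeff_eq_zero]
  intro k hk
  rw [coeff_P]
  have : ((S p)).filter (fun e => Dd p e = k) = ∅ := by
    rw [Finset.filter_eq_empty_iff]
    intro e he
    have := Dd_le_six p e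
    omega
  rw [this]
  simp

lemma P_ne_zero : P p ≠ 0 := by
  intro h
  have h6 : (P p).coeff 6 = 1 := by rw [coeff_P, card6]; norm_num
  rw [h] at h6
  simp at h6

lemma P_leadingCoeff : (P p).leadingCoeff = 1 := by
  rw [Polynomial.leadingCoeff, P_natDegree, coeff_P, card6]
  norm_num

lemma P_roots_card : Multiset.card (P p).roots = 6 := by
  rw [← P_natDegree p]
  exact (Polynomial.splits_iff_card_roots).mp (IsAlgClosed.splits _)

end Poly

section MultisetLemmas

lemma esymm_one' (s : Multiset ℂ) : s.esymm 1 = s.sum := by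
  rw [Multiset.esymm, Multiset.powersetCard_one, Multiset.map_map]
  simp

lemma esymm_two_cons (a : ℂ) (s : Multiset ℂ) :
    (a ::ₘ s).esymm 2 = a * s.sum + s.esymm 2 := by
  rw [Multiset.esymm, Multiset.esymm, show (2:ℕ) = 1 + 1 from rfl,
    Multiset.powersetCard_cons, Multiset.map_add, Multiset.sum_add,
    Multiset.powersetCard_one, Multiset.map_map, Multiset.map_map]
  simp only [Function.comp_def, Multiset.prod_cons, Multiset.prod_singleton]
  rw [add_comm]
  congr 1
  rw [Multiset.sum_map_mul_left]
  simp [Multiset.map_id']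

lemma sq_sum (s : Multiset ℂ) :
    s.sum ^ 2 = (s.map (fun r => r ^ 2)).sum + 2 * s.esymm 2 := by
  induction s using Multiset.induction with
  | empty => simp [Multiset.esymm, show Multiset.powersetCard 2 (0 : Multiset ℂ) = 0 from Multiset.powersetCard_zero_right 1]
  | cons a s ih =>
    rw [Multiset.sum_cons, Multiset.map_cons, Multiset.sum_cons, esymm_two_cons]
    linear_combination ih

end MultisetLemmas

lemma roots_sum (p : ℕ) : (P p).roots.sum = -2 := by
  have h := Polynomial.coeff_eq_esymm_roots_of_card
    (by rw [P_roots_card, P_natDegree]) (p := P p) (k := 5) (by rw [P_natDegree]; omega)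
  rw [P_natDegree, P_leadingCoeff, coeff_P, card5] at h
  norm_num at h
  rw [esymm_one'] at h
  linear_combination h

lemma roots_esymm2 (p : ℕ) : (P p).roots.esymm 2 = 3 + 2 * (p : ℂ) := by
  have h := Polynomial.coeff_eq_esymm_roots_of_card
    (by rw [P_roots_card, P_natDegree]) (p := P p) (k := 4) (by rw [P_natDegree]; omega)
  rw [P_natDegree, P_leadingCoeff, coeff_P, card4] at h
  norm_num at h
  push_cast at h
  linear_combination -h

lemma roots_sq_sum (p : ℕ) :
    ((P p).roots.map (fun r => r ^ 2)).sum = -(2 + 4 * (p : ℂ)) := by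
  have h := sq_sum (P p).roots
  rw [roots_sum, roots_esymm2] at h
  push_cast at h ⊢
  linear_combination -h

lemma wiener_conj (p : ℕ) (z : ℂ) :
    wienerPoly (Cat p) ((starRingEnd ℂ) z) = (starRingEnd ℂ) (wienerPoly (Cat p) z) := by
  unfold wienerPoly
  rw [map_sum]
  simp only [map_pow]

lemma main_claim (p : ℕ) (M' : ℝ) (hM' : 0 ≤ M') (hp : 6 * M' ^ 2 < 2 + 4 * (p : ℝ)) :
    ∃ z : ℂ, wienerPoly (Cat p) z = 0 ∧ M' < z.im := by
  by_contra hc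
  push_neg at hc
  have hroots : ∀ r ∈ (P p).roots, |r.im| ≤ M' := by
    intro r hr
    have h0 : wienerPoly (Cat p) r = 0 := by
      rw [← eval_P]
      exact (Polynomial.mem_roots'.mp hr).2
    have h0' : wienerPoly (Cat p) ((starRingEnd ℂ) r) = 0 := by
      rw [wiener_conj, h0, map_zero]
    have h1 := hc r h0
    have h2 := hc _ h0'
    rw [Complex.conj_im] at h2
    rw [abs_le]
    constructor <;> linarith
  have hterm : ∀ x ∈ (P p).roots.map (fun r => (r ^ 2).re), -(M' ^ 2) ≤ x := by
    intro x hx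
    obtain ⟨r, hr, rfl⟩ := Multiset.mem_map.mp hx
    have him : r.im ^ 2 ≤ M' ^ 2 := by
      have := hroots r hr
      nlinarith [abs_nonneg r.im, neg_abs_le r.im, le_abs_self r.im]
    have : (r ^ 2).re = r.re ^ 2 - r.im ^ 2 := by
      rw [sq, Complex.mul_re]; ring
    nlinarith [sq_nonneg r.re]
  have hsum := Multiset.card_nsmul_le_sum hterm
  have hcard : Multiset.card ((P p).roots.map (fun r => (r ^ 2).re)) = 6 := by
    rw [Multiset.card_map, P_roots_card]
  have hre : ((P p).roots.map (fun r => (r ^ 2).re)).sum = -(2 + 4 * (p : ℝ)) := by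
    have : ((P p).roots.map (fun r => (r ^ 2).re)).sum
        = (((P p).roots.map (fun r => r ^ 2)).sum).re := by
      have h2 := AddMonoidHom.map_multiset_sum Complex.reAddGroupHom
        ((P p).roots.map (fun r => r ^ 2))
      rw [Multiset.map_map, Complex.coe_reAddGroupHom] at h2
      simp only [Function.comp_def] at h2
      exact h2.symm
    rw [this, roots_sq_sum]
    simp
  rw [hcard, hre, nsmul_eq_mul] at hsum
  push_cast at hsum
  nlinarith

end WAux


/-- Wiener roots of trees have arbitrarily large imaginary part. -/
theorem stmt_16 (M : ℝ) :
    ∃ (n : ℕ) (T : SimpleGraph (Fin n)) (z : ℂ), T.IsTree ∧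
      wienerPoly T z = 0 ∧ M < z.im := by
  set M' : ℝ := max M 0 with hM'def
  have hM'0 : 0 ≤ M' := le_max_right M 0
  set q : ℕ := 2 * Nat.ceil (M' ^ 2) + 1 with hqdef
  have hq : 6 * M' ^ 2 < 2 + 4 * (q : ℝ) := by
    have h1 : M' ^ 2 ≤ (Nat.ceil (M' ^ 2) : ℝ) := Nat.le_ceil _
    have h2 : (q : ℝ) = 2 * (Nat.ceil (M' ^ 2) : ℝ) + 1 := by
      rw [hqdef]; push_cast; ring
    nlinarith
  obtain ⟨z, hz0, hzim⟩ := WAux.main_claim q M' hM'0 hq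
  exact ⟨q + 7, WAux.Cat q, z, WAux.cat_isTree q, hz0,
    lt_of_le_of_lt (le_max_left M 0) hzim⟩
end

section
/- For n ≥ 3, the path P_n satisfies W(P_n;x) = Σ_{i=1}^{n−1} (n−i)x^i, and every nonzero complex Wiener root z of P_n lies in the annulus (n−1)/(n−2) ≤ |z| ≤ 2. -/
set_option linter.unusedVariables false

open Finset SimpleGraph

lemma pathGraph_connected' {n : ℕ} (hn : 1 ≤ n) : (pathGraph n).Connected := by
  obtain ⟨m, rfl⟩ := Nat.exists_eq_add_of_le hn
  exact Nat.add_comm 1 m ▸ pathGraph_connected m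

lemma walk_len_ge {n : ℕ} : ∀ {u v : Fin n} (p : (pathGraph n).Walk u v),
    (v.val : ℤ) - u.val ≤ p.length ∧ (u.val : ℤ) - v.val ≤ p.length := by
  intro u v p
  induction p with
  | nil => simp
  | cons h p ih =>
    rw [pathGraph_adj] at h
    rcases ih with ⟨ih1, ih2⟩
    constructor <;> · simp only [SimpleGraph.Walk.length_cons]; push_cast; omega

lemma path_dist_le {n : ℕ} : ∀ (k : ℕ) (u v : Fin n), u.val + k = v.val →
    (pathGraph n).dist u v ≤ k := by
  intro k
  induction k with
  | zero => intro u v h; have : u = v := Fin.ext (by omega); simp [this]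
  | succ k ih =>
    intro u v h
    have hn : 1 ≤ n := Nat.pos_of_ne_zero (by rintro rfl; exact u.elim0)
    have hw : u.val + 1 < n := by have := v.isLt; omega
    set w : Fin n := ⟨u.val + 1, hw⟩ with hwdef
    have hadj : (pathGraph n).Adj u w := by rw [pathGraph_adj]; left; rfl
    calc (pathGraph n).dist u v ≤ (pathGraph n).dist u w + (pathGraph n).dist w v :=
          (pathGraph_connected' hn).dist_triangle
      _ ≤ 1 + k := by
          gcongr
          · have := SimpleGraph.dist_le hadj.toWalk
            simpa using this
          · exact ih w v (by simp [hwdef]; omega)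
      _ = k + 1 := by omega

lemma path_dist_eq {n : ℕ} (u v : Fin n) (h : u.val ≤ v.val) :
    (pathGraph n).dist u v = v.val - u.val := by
  have hn : 1 ≤ n := Nat.pos_of_ne_zero (by rintro rfl; exact u.elim0)
  refine le_antisymm (path_dist_le _ u v (by omega)) ?_
  obtain ⟨p, hp⟩ := ((pathGraph_connected' hn).preconnected u v).exists_walk_length_eq_dist
  have := (walk_len_ge p).1
  omega

lemma wiener_pairs (n : ℕ) (x : ℂ) :
    wienerPoly (pathGraph n) x
      = ∑ q ∈ (Finset.univ ×ˢ Finset.univ : Finset (Fin n × Fin n)).filter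
          (fun q => q.1 < q.2), x ^ (q.2.val - q.1.val) := by
  rw [wienerPoly]
  refine Finset.sum_nbij'
    (i := Sym2.lift ⟨fun a b => (min a b, max a b), fun a b => by simp [min_comm, max_comm]⟩)
    (j := fun q => s(q.1, q.2)) ?_ ?_ ?_ ?_ ?_
  · intro p hp
    induction p with
    | _ a b =>
      simp only [Finset.mem_filter, Sym2.mk_isDiag_iff] at hp
      simp only [Sym2.lift_mk, Finset.mem_filter, Finset.mem_product, Finset.mem_univ,
        true_and, and_true]
      exact min_lt_max.mpr hp.2
  · intro q hq
    simp only [Finset.mem_filter, Finset.mem_product] at hq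
    simp only [Finset.mem_filter, Sym2.mk_isDiag_iff]
    exact ⟨Finset.mem_sym2_iff.mpr (fun a _ => Finset.mem_univ a), hq.2.ne⟩
  · intro p hp
    induction p with
    | _ a b =>
      simp only [Sym2.lift_mk]
      rcases le_total a b with h | h
      · rw [min_eq_left h, max_eq_right h]
      · rw [min_eq_right h, max_eq_left h]; exact Sym2.eq_swap
  · intro q hq
    simp only [Finset.mem_filter, Finset.mem_product] at hq
    simp only [Sym2.lift_mk]
    exact Prod.ext (min_eq_left hq.2.le) (max_eq_right hq.2.le)
  · intro p hp
    induction p with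
    | _ a b =>
      simp only [Sym2.lift_mk]
      rcases le_total a b with h | h
      · rw [min_eq_left h, max_eq_right h, path_dist_eq a b h]
      · rw [min_eq_right h, max_eq_left h, SimpleGraph.dist_comm, path_dist_eq b a h]

lemma count_step (n : ℕ) (hn : 3 ≤ n) (x : ℂ) :
    (∑ q ∈ (Finset.univ ×ˢ Finset.univ : Finset (Fin n × Fin n)).filter
          (fun q => q.1 < q.2), x ^ (q.2.val - q.1.val))
      = ∑ i ∈ Finset.Icc 1 (n - 1), ((n : ℂ) - (i : ℂ)) * x ^ i := by
  rw [Finset.sum_filter, Finset.sum_product_right]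
  have inner : ∀ b : Fin n, (∑ a : Fin n, if a < b then x ^ (b.val - a.val) else 0)
      = ∑ j ∈ Finset.range b.val, x ^ (j + 1) := by
    intro b
    simp only [Fin.lt_def]
    rw [Fin.sum_univ_eq_sum_range (fun m => if m < b.val then x ^ (b.val - m) else 0)]
    rw [← Finset.sum_filter]
    have hf : (Finset.range n).filter (· < b.val) = Finset.range b.val := by
      ext m; simp only [Finset.mem_filter, Finset.mem_range]
      have := b.isLt; omega
    rw [hf]
    have := Finset.sum_range_reflect (fun j => x ^ (j + 1)) b.val
    rw [← this]
    refine Finset.sum_congr rfl (fun m hm => ?_)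
    rw [Finset.mem_range] at hm
    congr 1
    omega
  calc (∑ b : Fin n, ∑ a : Fin n, if a < b then x ^ (b.val - a.val) else 0)
      = ∑ b : Fin n, ∑ j ∈ Finset.range b.val, x ^ (j + 1) :=
        Finset.sum_congr rfl (fun b _ => inner b)
    _ = ∑ m ∈ Finset.range n, ∑ j ∈ Finset.range m, x ^ (j + 1) :=
        Fin.sum_univ_eq_sum_range (fun m => ∑ j ∈ Finset.range m, x ^ (j + 1)) n
    _ = ∑ m ∈ Finset.range n, ∑ j ∈ Finset.range n, if j < m then x ^ (j + 1) else 0 := by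
        refine Finset.sum_congr rfl (fun m hm => ?_)
        rw [Finset.mem_range] at hm
        rw [← Finset.sum_filter]
        congr 1
        ext j; simp only [Finset.mem_filter, Finset.mem_range]; omega
    _ = ∑ j ∈ Finset.range n, ∑ m ∈ Finset.range n, if j < m then x ^ (j + 1) else 0 :=
        Finset.sum_comm
    _ = ∑ j ∈ Finset.range n, (n - (j + 1)) • x ^ (j + 1) := by
        refine Finset.sum_congr rfl (fun j hj => ?_)
        rw [← Finset.sum_filter, Finset.sum_const]
        congr 1
        have : (Finset.range n).filter (fun m => j < m) = Finset.Ico (j+1) n := by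
          ext m; simp only [Finset.mem_filter, Finset.mem_range, Finset.mem_Ico]; omega
        rw [this, Nat.card_Ico]
    _ = ∑ i ∈ Finset.Icc 1 (n - 1), ((n : ℂ) - (i : ℂ)) * x ^ i := by
        have hIcc : Finset.Icc 1 (n - 1) = Finset.Ico 1 n := by
          ext i; simp only [Finset.mem_Icc, Finset.mem_Ico]; omega
        rw [hIcc, Finset.sum_Ico_eq_sum_range]
        have h1 : n = (n - 1) + 1 := by omega
        conv_lhs => rw [h1, Finset.sum_range_succ]
        have hlast : ((n-1) + 1 - ((n - 1) + 1)) • x ^ ((n - 1) + 1) = 0 := by simp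
        rw [hlast, add_zero]
        refine Finset.sum_congr rfl (fun j hj => ?_)
        rw [Finset.mem_range] at hj
        rw [nsmul_eq_mul, (by omega : n - 1 + 1 - (j+1) = n - (j+1)),
          Nat.cast_sub (by omega : j + 1 ≤ n)]
        push_cast
        ring_nf

lemma EK_id {R : Type*} [CommRing R] (α β : R) (u : ℕ → R) (x : R) :
    ∀ m : ℕ, 1 ≤ m →
    (α - β * x) * ∑ j ∈ Finset.range m, u j * x ^ (j+1)
      = α * u 0 * x + (∑ j ∈ Finset.range (m-1), (α * u (j+1) - β * u j) * x ^ (j+2))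
        - β * u (m-1) * x ^ (m+1) := by
  intro m
  induction m with
  | zero => omega
  | succ m ih =>
    intro _
    rcases Nat.eq_zero_or_pos m with rfl | hm
    · norm_num [Finset.sum_range_one, Finset.sum_range_zero]
      ring
    · have h1 : m + 1 - 1 = (m - 1) + 1 := by omega
      rw [Finset.sum_range_succ, h1, Finset.sum_range_succ, mul_add, ih hm]
      have h2 : m - 1 + 1 = m := by omega
      have h3 : m - 1 + 2 = m + 1 := by omega
      rw [h2, h3]
      ring

lemma Icc_to_range {K : Type*} [Field K] (n : ℕ) (hn : 3 ≤ n) (x : K) :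
    (∑ i ∈ Finset.Icc 1 (n - 1), ((n : K) - (i : K)) * x ^ i)
      = ∑ j ∈ Finset.range (n-1), ((n : K) - ((j : K) + 1)) * x ^ (j+1) := by
  have hIcc : Finset.Icc 1 (n - 1) = Finset.Ico 1 n := by
    ext i; simp only [Finset.mem_Icc, Finset.mem_Ico]; omega
  rw [hIcc, Finset.sum_Ico_eq_sum_range]
  refine Finset.sum_congr (by congr 1) (fun j hj => ?_)
  rw [add_comm 1 j]
  push_cast
  ring

/-- For `n ≥ 3`, `W(P_n;x) = Σ_{i=1}^{n-1} (n-i)x^i`, and every nonzero complex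
Wiener root `z` of the path `P_n` satisfies `(n-1)/(n-2) ≤ |z| ≤ 2`. -/
theorem stmt_19 (n : ℕ) (hn : 3 ≤ n) :
    (∀ x : ℂ, wienerPoly (SimpleGraph.pathGraph n) x
        = ∑ i ∈ Finset.Icc 1 (n - 1), ((n : ℂ) - (i : ℂ)) * x ^ i) ∧
    (∀ z : ℂ, z ≠ 0 → wienerPoly (SimpleGraph.pathGraph n) z = 0 →
      ((n : ℝ) - 1) / ((n : ℝ) - 2) ≤ ‖z‖ ∧ ‖z‖ ≤ 2) := by
  have part1 : ∀ x : ℂ, wienerPoly (SimpleGraph.pathGraph n) x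
      = ∑ i ∈ Finset.Icc 1 (n - 1), ((n : ℂ) - (i : ℂ)) * x ^ i := by
    intro x
    rw [wiener_pairs n x, count_step n hn x]
  refine ⟨part1, ?_⟩
  intro z hz hW
  rw [part1 z, Icc_to_range n hn z] at hW
  set t := ‖z‖ with htdef
  have ht0 : 0 < t := norm_pos_iff.mpr hz
  have hm1 : (1:ℕ) ≤ n - 1 := by omega
  have hmm : n - 1 - 1 = n - 2 := by omega
  have hmn : n - 1 + 1 = n := by omega
  have hcast2 : ((n - 2 : ℕ) : ℂ) = (n : ℂ) - 2 := by
    rw [Nat.cast_sub (by omega : 2 ≤ n)]; norm_num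
  have hcast2R : ((n - 2 : ℕ) : ℝ) = (n : ℝ) - 2 := by
    rw [Nat.cast_sub (by omega : 2 ≤ n)]; norm_num
  -- real positivity of A(t)
  have hApos : 0 < ∑ j ∈ Finset.range (n-1), ((n : ℝ) - ((j : ℝ) + 1)) * t ^ (j+1) := by
    refine Finset.sum_pos (fun j hj => ?_) (Finset.nonempty_range_iff.mpr (by omega))
    rw [Finset.mem_range] at hj
    have h1 : (j : ℝ) + 1 < (n : ℝ) := by
      have : (j : ℝ) < ((n : ℝ) - 1) := by
        have : (j : ℝ) < ((n - 1 : ℕ) : ℝ) := by exact_mod_cast hj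
        rwa [Nat.cast_sub (by omega : 1 ≤ n), Nat.cast_one] at this
      linarith
    exact mul_pos (by linarith) (pow_pos ht0 _)
  constructor
  · -- lower bound
    by_contra hlt
    push_neg at hlt
    have hn2 : (0:ℝ) < (n : ℝ) - 2 := by
      have : (3:ℝ) ≤ (n:ℝ) := by exact_mod_cast hn
      linarith
    have hβt : ((n:ℝ) - 2) * t < (n:ℝ) - 1 := by
      rw [lt_div_iff₀ hn2] at hlt
      linarith
    -- complex identity
    have eC := EK_id ((n:ℂ) - 1) ((n:ℂ) - 2) (fun j => (n:ℂ) - ((j:ℂ) + 1)) z (n-1) hm1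
    beta_reduce at eC
    rw [hW, mul_zero, hmm, hmn] at eC
    have hco : ∀ j ∈ Finset.range (n-2),
        (((n:ℂ) - 1) * ((n:ℂ) - (((j+1 : ℕ):ℂ) + 1)) - ((n:ℂ) - 2) * ((n:ℂ) - ((j:ℂ) + 1)))
          * z ^ (j+2) = -((j:ℂ) * z ^ (j+2)) := by
      intro j _
      push_cast
      ring
    rw [Finset.sum_congr rfl hco, Finset.sum_neg_distrib] at eC
    have hune : ((n:ℂ) - (((n - 2 : ℕ):ℂ) + 1)) = 1 := by rw [hcast2]; ring
    rw [hune] at eC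
    have e1 : ((n:ℂ) - 1)^2 * z
        = (∑ j ∈ Finset.range (n-2), (j:ℂ) * z ^ (j+2)) + ((n:ℂ) - 2) * z ^ n := by
      push_cast at eC ⊢
      linear_combination -eC
    -- take absolute values
    have habs : ((n:ℝ) - 1)^2 * t
        ≤ (∑ j ∈ Finset.range (n-2), (j:ℝ) * t ^ (j+2)) + ((n:ℝ) - 2) * t ^ n := by
      have hL : ((n:ℝ) - 1)^2 * t = ‖((n:ℂ) - 1)^2 * z‖ := by
        rw [norm_mul, norm_pow]
        have h1 : ((n:ℂ) - 1) = ((((n:ℝ) - 1 : ℝ)) : ℂ) := by push_cast; ring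
        rw [h1, Complex.norm_real, Real.norm_eq_abs, abs_of_nonneg (by
          have : (3:ℝ) ≤ (n:ℝ) := by exact_mod_cast hn
          linarith)]
      rw [hL, e1]
      refine le_trans (norm_add_le _ _) ?_
      gcongr
      · refine le_trans (norm_sum_le _ _) ?_
        refine le_of_eq (Finset.sum_congr rfl (fun j _ => ?_))
        rw [norm_mul, norm_pow, Complex.norm_natCast]
      · rw [norm_mul, norm_pow]
        have h2 : ((n:ℂ) - 2) = ((((n:ℝ) - 2 : ℝ)) : ℂ) := by push_cast; ring
        rw [h2, Complex.norm_real, Real.norm_eq_abs, abs_of_nonneg (by linarith)]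
    -- real identity
    have eR := EK_id ((n:ℝ) - 1) ((n:ℝ) - 2) (fun j => (n:ℝ) - ((j:ℝ) + 1)) t (n-1) hm1
    beta_reduce at eR
    rw [hmm, hmn] at eR
    have hcoR : ∀ j ∈ Finset.range (n-2),
        (((n:ℝ) - 1) * ((n:ℝ) - (((j+1 : ℕ):ℝ) + 1)) - ((n:ℝ) - 2) * ((n:ℝ) - ((j:ℝ) + 1)))
          * t ^ (j+2) = -((j:ℝ) * t ^ (j+2)) := by
      intro j _
      push_cast
      ring
    rw [Finset.sum_congr rfl hcoR, Finset.sum_neg_distrib] at eR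
    have huneR : ((n:ℝ) - (((n - 2 : ℕ):ℝ) + 1)) = 1 := by rw [hcast2R]; ring
    rw [huneR] at eR
    have hfac : 0 < ((n:ℝ) - 1 - ((n:ℝ) - 2) * t) := by linarith
    have := mul_pos hfac hApos
    push_cast at eR
    nlinarith [habs, eR, this]
  · -- upper bound
    by_contra hgt
    push_neg at hgt
    have eC := EK_id (2 : ℂ) (1 : ℂ) (fun j => (n:ℂ) - ((j:ℂ) + 1)) z (n-1) hm1
    beta_reduce at eC
    rw [hW, mul_zero, hmm, hmn] at eC
    have hco : ∀ j ∈ Finset.range (n-2),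
        ((2:ℂ) * ((n:ℂ) - (((j+1 : ℕ):ℂ) + 1)) - (1:ℂ) * ((n:ℂ) - ((j:ℂ) + 1)))
          * z ^ (j+2) = (((n - (j+3) : ℕ) : ℂ)) * z ^ (j+2) := by
      intro j hj
      rw [Finset.mem_range] at hj
      rw [Nat.cast_sub (by omega : j + 3 ≤ n)]
      push_cast
      ring
    rw [Finset.sum_congr rfl hco] at eC
    have hune : ((n:ℂ) - (((n - 2 : ℕ):ℂ) + 1)) = 1 := by rw [hcast2]; ring
    rw [hune] at eC
    have e1 : z ^ n = 2 * ((n:ℂ) - 1) * z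
        + ∑ j ∈ Finset.range (n-2), (((n - (j+3) : ℕ) : ℂ)) * z ^ (j+2) := by
      push_cast at eC ⊢
      linear_combination eC
    have habs : t ^ n ≤ 2 * ((n:ℝ) - 1) * t
        + ∑ j ∈ Finset.range (n-2), (((n - (j+3) : ℕ) : ℝ)) * t ^ (j+2) := by
      have hL : t ^ n = ‖z ^ n‖ := by rw [norm_pow]
      rw [hL, e1]
      refine le_trans (norm_add_le _ _) ?_
      gcongr
      · rw [norm_mul, norm_mul]
        have h1 : ((n:ℂ) - 1) = ((((n:ℝ) - 1 : ℝ)) : ℂ) := by push_cast; ring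
        rw [h1, Complex.norm_real, Real.norm_eq_abs, abs_of_nonneg (by
          have : (3:ℝ) ≤ (n:ℝ) := by exact_mod_cast hn
          linarith)]
        simp [htdef]
      · refine le_trans (norm_sum_le _ _) ?_
        refine le_of_eq (Finset.sum_congr rfl (fun j _ => ?_))
        rw [norm_mul, norm_pow, Complex.norm_natCast]
    -- real identity
    have eR := EK_id (2 : ℝ) (1 : ℝ) (fun j => (n:ℝ) - ((j:ℝ) + 1)) t (n-1) hm1
    beta_reduce at eR
    rw [hmm, hmn] at eR
    have hcoR : ∀ j ∈ Finset.range (n-2),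
        ((2:ℝ) * ((n:ℝ) - (((j+1 : ℕ):ℝ) + 1)) - (1:ℝ) * ((n:ℝ) - ((j:ℝ) + 1)))
          * t ^ (j+2) = (((n - (j+3) : ℕ) : ℝ)) * t ^ (j+2) := by
      intro j hj
      rw [Finset.mem_range] at hj
      rw [Nat.cast_sub (by omega : j + 3 ≤ n)]
      push_cast
      ring
    rw [Finset.sum_congr rfl hcoR] at eR
    have huneR : ((n:ℝ) - (((n - 2 : ℕ):ℝ) + 1)) = 1 := by rw [hcast2R]; ring
    rw [huneR] at eR
    have hfac : 0 < (t - 2) := by linarith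
    have := mul_pos hfac hApos
    push_cast at eR
    nlinarith [habs, eR, this]
end
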